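/- Let R be a Dedekind domain whose ideal class group is finitely generated. Then there exists a nonzero element f in R such that the localization R[1/f] is a principal ideal domain. -/

import Mathlib

/-!
Pick nonzero ideals `I₁, …, Iₙ` whose classes generate the class group of `R`, and a nonzero
`f ∈ I₁ ⋯ Iₙ`. Each `Iₖ` extends to the unit ideal of `R[1/f]`, so the extension homomorphism
`Cl(R) → Cl(R[1/f])` is trivial. Since every ideal of `R[1/f]` is extended from `R`, every ideal
of `R[1/f]` is then principal.
-/

open scoped nonZeroDivisors

theorem Ideal.exists_ne_zero_forall_mem {R ι : Type*} [CommRing R] [IsDomain R]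
    (s : Finset ι) (I : ι → Ideal R) (hI : ∀ i ∈ s, I i ≠ ⊥) :
    ∃ f ≠ 0, ∀ i ∈ s, f ∈ I i := by
  obtain ⟨f, hf, hf0⟩ := Submodule.exists_mem_ne_zero_of_ne_bot (Finset.prod_ne_zero_iff.mpr hI)
  exact ⟨f, hf0, fun i hi => Finset.inf_le (f := I) hi (Ideal.prod_le_inf hf)⟩

namespace ClassGroup

variable {R : Type*} (A : Type*) [CommRing R] [IsDedekindDomain R]
  [CommRing A] [IsDedekindDomain A] [Algebra R A] [Module.IsTorsionFree R A]

theorem extendedHom_mk0_eq_one_of_map_eq_top (I : (Ideal R)⁰)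
    (hI : (I : Ideal R).map (algebraMap R A) = ⊤) : extendedHom R A (mk0 I) = 1 := by
  rw [extendedHom_mk0, mk0_eq_one_iff]
  simpa [hI] using top_isPrincipal

theorem isPrincipalIdealRing_of_extendedHom_eq_one (M : Submonoid R) [IsLocalization M A]
    (h : extendedHom R A = 1) : IsPrincipalIdealRing A := by
  refine ⟨fun J => ?_⟩
  obtain rfl | hJ := eq_or_ne J ⊥
  · exact bot_isPrincipal
  have hJ_map : (J.under R).map (algebraMap R A) = J := IsLocalization.map_under M A J
  have hJ_under : J.under R ∈ (Ideal R)⁰ :=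
    mem_nonZeroDivisors_iff_ne_zero.mpr fun h => hJ <| by
      rw [← hJ_map, h, Submodule.zero_eq_bot, Ideal.map_bot]
  have := DFunLike.congr_fun h (mk0 ⟨_, hJ_under⟩)
  rwa [extendedHom_mk0, MonoidHom.one_apply, mk0_eq_one_iff, hJ_map] at this

end ClassGroup

theorem exists_localization_away_pid_of_fg_classGroup_general
    (R : Type*) [CommRing R] [IsDedekindDomain R]
    (hR : Group.FG (ClassGroup R)) :
    ∃ f : R, f ≠ 0 ∧ IsPrincipalIdealRing (Localization.Away f) := by
  obtain ⟨S, hS_gen, hS_fin⟩ := Group.fg_iff.mp hR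
  choose I hI using fun c : ClassGroup R => ClassGroup.mk0_surjective c
  obtain ⟨f, hf0, hfI⟩ := Ideal.exists_ne_zero_forall_mem hS_fin.toFinset (fun c => (I c : Ideal R))
    fun c _ => mem_nonZeroDivisors_iff_ne_zero.mp (I c).2
  have hf_le : Submonoid.powers f ≤ R⁰ := powers_le_nonZeroDivisors_of_noZeroDivisors hf0
  have := IsLocalization.isDomain_of_le_nonZeroDivisors (Localization.Away f) hf_le
  have := IsLocalization.isDedekindDomain R hf_le (Localization.Away f)
  refine ⟨f, hf0, ClassGroup.isPrincipalIdealRing_of_extendedHom_eq_one _ (.powers f) ?_⟩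
  refine MonoidHom.eq_of_eqOn_dense hS_gen fun c hc => ?_
  rw [← hI c, MonoidHom.one_apply]
  exact ClassGroup.extendedHom_mk0_eq_one_of_map_eq_top _ _ (Ideal.eq_top_of_isUnit_mem _
    (Ideal.mem_map_of_mem _ (hfI c (hS_fin.mem_toFinset.mpr hc)))
    (IsLocalization.Away.algebraMap_isUnit f))

/-- If the ideal class group of a Dedekind domain `R` is finitely generated, then
there is a nonzero `f : R` such that `R[1/f]` is a principal ideal domain. -/
theorem exists_localization_away_pid_of_fg_classGroup
    (R : Type*) [CommRing R] [IsDomain R] [IsDedekindDomain R]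
    (hR : Group.FG (ClassGroup R)) :
    ∃ f : R, f ≠ 0 ∧ IsPrincipalIdealRing (Localization.Away f) :=
  exists_localization_away_pid_of_fg_classGroup_general R hR
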